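/- Under the symmetric channel condition g_{r1} = g_{1r}, g_{r2} = g_{2r}, g_{21} = g_{12} (all positive), and with σ_g² = (g_{r2}²P + g_{12}²P + 1)/(g_{r2}²P − g_{12}²P − 1) and σ_{c1}² = (1+g_{21}²P)/(g_{2r}²P): either σ_g² ≤ 0 (when g_{r2}²P ≤ g_{12}²P + 1) or 0 < σ_{c1}² ≤ σ_g² holds. -/
import Mathlib

/-- Under the symmetric channel condition `g_{r1} = g_{1r}`,
`g_{r2} = g_{2r}`, `g_{21} = g_{12}` (all positive), with
`σ_g² = (g_{r2}²P + g_{12}²P + 1)/(g_{r2}²P − g_{12}²P − 1)` and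
`σ_{c1}² = (1+g_{21}²P)/(g_{2r}²P)`: either `σ_g² ≤ 0` or `0 < σ_{c1}² ≤ σ_g²`. -/
theorem stmt17 (P g12 g21 g1r g2r gr1 gr2 : ℝ) (hP : 0 < P)
    (hg12 : 0 < g12) (hg21 : 0 < g21) (hg1r : 0 < g1r) (hg2r : 0 < g2r)
    (hgr1 : 0 < gr1) (hgr2 : 0 < gr2)
    (hsym1 : gr1 = g1r) (hsym2 : gr2 = g2r) (hsym3 : g21 = g12) :
    let σg : ℝ := (gr2 ^ 2 * P + g12 ^ 2 * P + 1) / (gr2 ^ 2 * P - g12 ^ 2 * P - 1)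
    let σc1 : ℝ := (1 + g21 ^ 2 * P) / (g2r ^ 2 * P)
    σg ≤ 0 ∨ (0 < σc1 ∧ σc1 ≤ σg) := by
  intro σg σc1
  subst hsym2 hsym3
  rcases le_or_gt (gr2 ^ 2 * P - g21 ^ 2 * P - 1) 0 with hd | hd
  · left
    have hnum : 0 < gr2 ^ 2 * P + g21 ^ 2 * P + 1 := by positivity
    exact div_nonpos_of_nonneg_of_nonpos hnum.le hd
  · right
    have hden : 0 < gr2 ^ 2 * P := by positivity
    constructor
    · exact div_pos (by positivity) hden
    · rw [div_le_div_iff₀ hden hd]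
      nlinarith [sq_nonneg (gr2 ^ 2 * P), sq_nonneg (1 + g21 ^ 2 * P)]
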